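/- Let n ≥ 2, let σ = (a_1, …, a_n) ∈ ℕ^n be a weight vector with c := a_n, let σ' = (a_1, …, a_{n−1}), and let d ∈ ℕ with d ≥ c. Let ev_0 : ℂ[x_1, …, x_n] → ℂ[x_1, …, x_{n−1}] be the ℂ-algebra homomorphism given by substituting x_n = 0. Then ev_0 maps the σ-weighted ideal I_{σ,d} surjectively onto the σ'-weighted ideal I_{σ',d} of ℂ[x_1, …, x_{n−1}], and the kernel of the restriction of ev_0 to I_{σ,d} is exactly x_n · I_{σ,d−c}. -/

import Mathlib

/-!
`I_{σ,d}` is a monomial ideal: a polynomial lies in it iff each of its monomials has weight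
at least `d`. Setting `x_n = 0` kills the monomials divisible by `x_n` and keeps the others
with their weight, and the inclusion `ℂ[x_1, …, x_{n-1}] → ℂ[x_1, …, x_n]` is a weight-preserving
section of it, which gives surjectivity. The kernel of `x_n ↦ 0` on the whole ring is `(x_n)`,
and if `x_n p ∈ I_{σ,d}` then every monomial of `p` has weight at least `d - c`.
-/

open MvPolynomial

/-- For a weight vector `σ = (a_1, …, a_n) ∈ ℕ^n` and `d ∈ ℕ`, the `σ`-weighted ideal of
degree `d` is the ideal of `ℂ[x_1, …, x_n]` generated by all monomials
`x_1^{s_1} ⋯ x_n^{s_n}` with `Σ_j s_j a_j ≥ d`. -/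
noncomputable def weightedIdeal (n : ℕ) (σ : Fin n → ℕ) (d : ℕ) : Ideal (MvPolynomial (Fin n) ℂ) :=
  Ideal.span {p | ∃ s : Fin n →₀ ℕ, d ≤ ∑ j, s j * σ j ∧ p = monomial s (1 : ℂ)}

lemma Finsupp.weight_mapDomain {ι κ : Type*} (f : ι → κ) (w : κ → ℕ) (t : ι →₀ ℕ) :
    weight w (mapDomain f t) = weight (w ∘ f) t :=
  linearCombination_mapDomain ..

lemma Finsupp.exists_mapDomain_castSucc_eq {m : ℕ} {M : Type*} [AddCommMonoid M]
    {s : Fin (m + 1) →₀ M} (hs : s (Fin.last m) = 0) : ∃ t : Fin m →₀ M, t.mapDomain Fin.castSucc = s := by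
  refine ⟨_, Finsupp.mapDomain_comapDomain _ (Fin.castSucc_injective m) s fun i hi => ?_⟩
  refine Fin.exists_castSucc_eq.mpr ?_
  rintro rfl
  exact Finsupp.mem_support_iff.mp hi hs

namespace MvPolynomial

section CommSemiring

variable (R : Type*) [CommSemiring R] (m : ℕ)

noncomputable def evalLastZero : MvPolynomial (Fin (m + 1)) R →ₐ[R] MvPolynomial (Fin m) R :=
  aeval (Fin.snoc X 0)

variable {R m}

@[simp]
lemma evalLastZero_X_last : evalLastZero R m (X (Fin.last m)) = 0 := by
  simp [evalLastZero]

@[simp]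
lemma evalLastZero_rename_castSucc (p : MvPolynomial (Fin m) R) :
    evalLastZero R m (rename Fin.castSucc p) = p := by
  rw [evalLastZero, aeval_rename]
  convert aeval_X_left_apply p
  ext1 j
  simp

lemma evalLastZero_monomial_of_ne {s : Fin (m + 1) →₀ ℕ} (hs : s (Fin.last m) ≠ 0) (a : R) :
    evalLastZero R m (monomial s a) = 0 := by
  obtain ⟨q, hq⟩ := X_dvd_monomial.mpr (Or.inr hs : a = 0 ∨ _)
  rw [hq, map_mul, evalLastZero_X_last, zero_mul]

end CommSemiring

lemma ker_evalLastZero {R : Type*} [CommRing R] {m : ℕ} :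
    RingHom.ker (evalLastZero R m) = Ideal.span {X (Fin.last m)} := by
  refine le_antisymm (fun g hg => ?_) (Ideal.span_le.mpr (by simp))
  suffices ∀ g, g - rename Fin.castSucc (evalLastZero R m g) ∈ Ideal.span {X (Fin.last m)} by
    simpa [RingHom.mem_ker.mp hg] using this g
  intro g
  induction g using MvPolynomial.induction_on' with
  | monomial s a =>
    by_cases hs : s (Fin.last m) = 0
    · obtain ⟨t, rfl⟩ := Finsupp.exists_mapDomain_castSucc_eq hs
      rw [← rename_monomial, evalLastZero_rename_castSucc, sub_self]
      exact zero_mem _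
    · rw [evalLastZero_monomial_of_ne hs, map_zero, sub_zero, Ideal.mem_span_singleton]
      exact X_dvd_monomial.mpr (Or.inr hs)
  | add p q hp hq =>
    rw [map_add, map_add, add_sub_add_comm]
    exact add_mem hp hq

end MvPolynomial

open Finsupp in
lemma weightedIdeal_eq_span (n : ℕ) (σ : Fin n → ℕ) (d : ℕ) :
    weightedIdeal n σ d = Ideal.span ((monomial · (1 : ℂ)) '' {s | d ≤ weight σ s}) := by
  simp only [weightedIdeal, weight_eq_sum, smul_eq_mul, Set.image, eq_comm (b := monomial _ _)]
  rfl

lemma mem_weightedIdeal_iff {n : ℕ} {σ : Fin n → ℕ} {d : ℕ} {p : MvPolynomial (Fin n) ℂ} :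
    p ∈ weightedIdeal n σ d ↔ ∀ s ∈ p.support, d ≤ Finsupp.weight σ s := by
  rw [weightedIdeal_eq_span, mem_ideal_span_monomial_image]
  refine forall₂_congr fun s _ => ⟨?_, fun hs => ⟨s, hs, le_rfl⟩⟩
  rintro ⟨t, ht, hts⟩
  obtain ⟨u, rfl⟩ := le_iff_exists_add.mp hts
  exact ht.trans (by simp)

lemma monomial_mem_weightedIdeal {n : ℕ} {σ : Fin n → ℕ} {d : ℕ} {s : Fin n →₀ ℕ}
    (hs : d ≤ Finsupp.weight σ s) : monomial s 1 ∈ weightedIdeal n σ d :=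
  weightedIdeal_eq_span n σ d ▸ Ideal.subset_span ⟨s, hs, rfl⟩

lemma weightedIdeal_le_comap {k n : ℕ} {σ : Fin n → ℕ} {τ : Fin k → ℕ} {d : ℕ}
    (φ : MvPolynomial (Fin n) ℂ →ₐ[ℂ] MvPolynomial (Fin k) ℂ)
    (hφ : ∀ s, d ≤ Finsupp.weight σ s → φ (monomial s 1) ∈ weightedIdeal k τ d) :
    weightedIdeal n σ d ≤ (weightedIdeal k τ d).comap φ := by
  rw [weightedIdeal_eq_span, Ideal.span_le]
  rintro _ ⟨s, hs, rfl⟩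
  exact hφ s hs

lemma rename_mem_weightedIdeal {k n : ℕ} {σ : Fin n → ℕ} {d : ℕ} (f : Fin k → Fin n)
    {p : MvPolynomial (Fin k) ℂ} (hp : p ∈ weightedIdeal k (σ ∘ f) d) :
    rename f p ∈ weightedIdeal n σ d := by
  refine weightedIdeal_le_comap (rename f) (fun s hs => ?_) hp
  rw [rename_monomial]
  exact monomial_mem_weightedIdeal (by rwa [Finsupp.weight_mapDomain])

lemma mem_weightedIdeal_of_X_mul_mem {n : ℕ} {σ : Fin n → ℕ} {d : ℕ} {i : Fin n}
    {p : MvPolynomial (Fin n) ℂ} (h : X i * p ∈ weightedIdeal n σ d) :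
    p ∈ weightedIdeal n σ (d - σ i) := by
  rw [mem_weightedIdeal_iff] at h ⊢
  intro u hu
  have hXu : Finsupp.single i 1 + u ∈ (X i * p).support := by
    rwa [mem_support_iff, coeff_X_mul, ← mem_support_iff]
  have := h _ hXu
  rw [map_add, Finsupp.weight_single, one_smul] at this
  omega

lemma evalLastZero_mem_weightedIdeal {m : ℕ} {σ : Fin (m + 1) → ℕ} {d : ℕ}
    {g : MvPolynomial (Fin (m + 1)) ℂ} (hg : g ∈ weightedIdeal (m + 1) σ d) :
    evalLastZero ℂ m g ∈ weightedIdeal m (σ ∘ Fin.castSucc) d := by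
  refine weightedIdeal_le_comap (evalLastZero ℂ m) (fun s hs => ?_) hg
  by_cases hlast : s (Fin.last m) = 0
  · obtain ⟨t, rfl⟩ := Finsupp.exists_mapDomain_castSucc_eq hlast
    rw [← rename_monomial, evalLastZero_rename_castSucc]
    exact monomial_mem_weightedIdeal (by rwa [Finsupp.weight_mapDomain] at hs)
  · rw [evalLastZero_monomial_of_ne hlast]
    exact zero_mem _

/-- Let `n ≥ 2`, `c := a_n`, `σ' = (a_1, …, a_{n−1})` and `d ≥ c`. The substitution
`x_n = 0` map `ev₀ : ℂ[x_1, …, x_n] → ℂ[x_1, …, x_{n−1}]` sends `I_{σ,d}` surjectively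
onto `I_{σ',d}`, and the kernel of its restriction to `I_{σ,d}` is exactly
`x_n · I_{σ,d−c}`. -/
theorem stmt_4 (n : ℕ) (hn : 2 ≤ n) (σ : Fin n → ℕ) (d : ℕ)
    (c : ℕ) (hc : c = σ ⟨n - 1, by omega⟩)
    (σ' : Fin (n - 1) → ℕ) (hσ' : ∀ j : Fin (n - 1), σ' j = σ (Fin.castLE (by omega) j))
    (ev₀ : MvPolynomial (Fin n) ℂ →ₐ[ℂ] MvPolynomial (Fin (n - 1)) ℂ)
    (hev : ev₀ = aeval (fun i : Fin n =>
        if h : (i : ℕ) < n - 1 then X (⟨(i : ℕ), h⟩ : Fin (n - 1)) else 0)) :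
    (∀ g ∈ weightedIdeal n σ d, ev₀ g ∈ weightedIdeal (n - 1) σ' d) ∧
    (∀ h ∈ weightedIdeal (n - 1) σ' d, ∃ g ∈ weightedIdeal n σ d, ev₀ g = h) ∧
    (∀ g ∈ weightedIdeal n σ d,
      (ev₀ g = 0 ↔ ∃ p ∈ weightedIdeal n σ (d - c),
        g = X (⟨n - 1, by omega⟩ : Fin n) * p)) := by
  obtain ⟨m, rfl⟩ : ∃ m, n = m + 1 := ⟨n - 1, by omega⟩
  -- `Fin.snoc X 0` unfolds to exactly the `dite` in `hev`.
  obtain rfl : ev₀ = evalLastZero ℂ m := hev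
  obtain rfl : σ' = σ ∘ Fin.castSucc := funext hσ'
  obtain rfl : c = σ (Fin.last m) := hc
  refine ⟨fun g => evalLastZero_mem_weightedIdeal,
    fun h hh => ⟨_, rename_mem_weightedIdeal _ hh, evalLastZero_rename_castSucc h⟩,
    fun g hg => ⟨fun h0 => ?_, ?_⟩⟩
  · have hg0 : g ∈ Ideal.span {X (Fin.last m)} :=
      ker_evalLastZero (R := ℂ) ▸ RingHom.mem_ker.mpr h0
    obtain ⟨p, rfl⟩ := Ideal.mem_span_singleton.mp hg0
    exact ⟨p, mem_weightedIdeal_of_X_mul_mem hg, rfl⟩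
  · rintro ⟨p, -, rfl⟩
    exact (map_mul ..).trans (mul_eq_zero_of_left evalLastZero_X_last _)
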